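/- arXiv:math/0410590 — 2 statements merged into one kernel-verified Lean document; each statement's English description precedes it below -/
import Mathlib

section
/- Let V be a finite symplectic vector space with |V| = e², and let G be a finite solvable group that acts faithfully, irreducibly and symplectically on V. Assume the Fitting subgroup F(G) acts Frobeniusly on V (every nontrivial element of F(G) acts without nonzero fixed points). Then every normal cyclic subgroup M of F(G) satisfies |M| ≤ e + 1. -/
open scoped Classical

namespace ACFew

/-- The usual inner product of complex-valued class functions on a finite group. -/
noncomputable def charInner (G : Type*) [Group G] (φ ψ : G → ℂ) : ℂ :=
  (Nat.card G : ℂ)⁻¹ * ∑ᶠ g : G, φ g * (starRingEnd ℂ) (ψ g)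

/-- `χ : G → ℂ` is a (complex) character of `G`:
the trace function of some finite-dimensional complex representation. -/
def IsChar (G : Type*) [Group G] (χ : G → ℂ) : Prop :=
  ∃ (n : ℕ) (ρ : Representation ℂ G (Fin n → ℂ)),
    ∀ g : G, χ g = LinearMap.trace ℂ (Fin n → ℂ) (ρ g)

/-- `χ` is an irreducible character of a finite group: a character with `[χ, χ] = 1`. -/
def IsIrrChar (G : Type*) [Group G] (χ : G → ℂ) : Prop :=
  IsChar G χ ∧ charInner G χ χ = 1

/-- The kernel of a character, as a set. -/
def charKer {G : Type*} [Group G] (χ : G → ℂ) : Set G := {g | χ g = χ 1}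

/-- A character is faithful if its kernel is trivial. -/
def IsFaithfulChar {G : Type*} [Group G] (χ : G → ℂ) : Prop := charKer χ = {1}

/-- Restriction of a class function to a subgroup. -/
def charRes {G : Type*} [Group G] (H : Subgroup G) (χ : G → ℂ) : ↥H → ℂ := fun h => χ (h : G)

/-- `E/Z` is a chief factor of `G`: both are normal in `G`, `Z < E`,
and there is no normal subgroup of `G` properly between them. -/
def IsChiefFactor {G : Type*} [Group G] (Z E : Subgroup G) : Prop :=
  Z.Normal ∧ E.Normal ∧ Z < E ∧
    ∀ N : Subgroup G, N.Normal → Z ≤ N → N ≤ E → N = Z ∨ N = E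

/-- The Fitting subgroup of a group: the join of all normal nilpotent subgroups. -/
def fittingSubgroup (G : Type*) [Group G] : Subgroup G :=
  ⨆ (H : Subgroup G) (_ : H.Normal ∧ Group.IsNilpotent ↥H), H

theorem map_conj_eq_of_normal {G : Type*} [Group G] (H : Subgroup G) (hH : H.Normal) (g : G) :
    H.map (MulAut.conj g).toMonoidHom = H := by
  ext x
  constructor
  · rintro ⟨y, hy, rfl⟩
    exact hH.conj_mem y hy g
  · intro hx
    exact ⟨g⁻¹ * x * g, by simpa using hH.conj_mem x hx g⁻¹, by simp [MulAut.conj]; group⟩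

instance fittingSubgroup_normal (G : Type*) [Group G] : (fittingSubgroup G).Normal := by
  constructor
  intro n hn g
  have hmap : (fittingSubgroup G).map (MulAut.conj g).toMonoidHom = fittingSubgroup G := by
    unfold fittingSubgroup
    rw [Subgroup.map_iSup]
    refine iSup_congr fun H => ?_
    rw [Subgroup.map_iSup]
    exact iSup_congr fun h => map_conj_eq_of_normal H h.1 g
  have : (MulAut.conj g).toMonoidHom n ∈ (fittingSubgroup G).map (MulAut.conj g).toMonoidHom :=
    Subgroup.mem_map_of_mem _ hn
  rw [hmap] at this
  simpa [MulAut.conj] using this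

/-- `F₂(G)`: the preimage in `G` of the Fitting subgroup of `G / F(G)`. -/
def fitting2 (G : Type*) [Group G] : Subgroup G :=
  (fittingSubgroup (G ⧸ fittingSubgroup G)).comap (QuotientGroup.mk' (fittingSubgroup G))

instance fitting2_normal (G : Type*) [Group G] : (fitting2 G).Normal :=
  Subgroup.normal_comap _

/-- An extraspecial 2-group: a 2-group whose center, derived subgroup and Frattini
subgroup coincide and have order 2. -/
def IsExtraspecial2Group (E : Type*) [Group E] : Prop :=
  IsPGroup 2 E ∧ Subgroup.center E = commutator E ∧ Subgroup.center E = frattini E ∧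
    Nat.card (Subgroup.center E) = 2

/-- `H` is the central product of the quaternion group `Q₈` and the dihedral group of
order 8: it is generated by elementwise-commuting copies of `Q₈` and `D₈` which intersect
in the center of `H`. -/
def IsCentralProductQ8D8 (H : Type*) [Group H] : Prop :=
  ∃ A B : Subgroup H,
    Nonempty (A ≃* QuaternionGroup 2) ∧ Nonempty (B ≃* DihedralGroup 4) ∧
    (∀ a ∈ A, ∀ b ∈ B, a * b = b * a) ∧ A ⊔ B = ⊤ ∧ A ⊓ B = Subgroup.center H

/-- The generators of the presentation of `G̃L(2,3)`. -/
def gltX : FreeGroup (Fin 3) := FreeGroup.of 0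
def gltY : FreeGroup (Fin 3) := FreeGroup.of 1
def gltZ : FreeGroup (Fin 3) := FreeGroup.of 2

/-- The relators `x⁸ = 1`, `y² = x⁴`, `z³ = 1`, `xʸ = x⁻¹`, `zˣ = x²yz⁻¹`, `(x²)ᶻ = y`
defining `G̃L(2,3)`. -/
def gltRels : Set (FreeGroup (Fin 3)) :=
  { gltX ^ 8,
    gltY ^ 2 * (gltX ^ 4)⁻¹,
    gltZ ^ 3,
    (gltY⁻¹ * gltX * gltY) * gltX,
    (gltX⁻¹ * gltZ * gltX) * (gltX ^ 2 * gltY * gltZ⁻¹)⁻¹,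
    (gltZ⁻¹ * gltX ^ 2 * gltZ) * gltY⁻¹ }

/-- The group `G̃L(2,3)`, given by the presentation
`⟨x, y, z ∣ x⁸ = 1, y² = x⁴, z³ = 1, xʸ = x⁻¹, zˣ = x²yz⁻¹, (x²)ᶻ = y⟩`. -/
abbrev GLtilde23 : Type := PresentedGroup gltRels

/-- A finite group is supersolvable if it has a normal series with cyclic factors,
all of whose terms are normal in `G`. -/
def IsSupersolvable (G : Type*) [Group G] : Prop :=
  ∃ (n : ℕ) (c : Fin (n + 1) → Subgroup G),
    c 0 = ⊥ ∧ c (Fin.last n) = ⊤ ∧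
    (∀ i : Fin n, c i.castSucc ≤ c i.succ) ∧
    (∀ i, (c i).Normal) ∧
    ∀ i : Fin n, ∃ x : G, c i.succ ≤ c i.castSucc ⊔ Subgroup.closure {x}

/-- The stabilizer in `G` of a class function `θ` on a subgroup `K`, as a set. -/
def charStabilizer {G : Type*} [Group G] (K : Subgroup G) (θ : ↥K → ℂ) : Set G :=
  {g : G | ∀ (k : G) (hk : k ∈ K) (hk' : g * k * g⁻¹ ∈ K), θ ⟨g * k * g⁻¹, hk'⟩ = θ ⟨k, hk⟩}

/-- The subgroup of `Equiv.Perm L` given by multiplication by nonzero field elements. -/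
def unitsMulGroup (L : Type*) [Field L] : Subgroup (Equiv.Perm L) :=
  (MulAction.toPermHom Lˣ L).range

/-- The semilinear group `Γ(L/K)`: the group of permutations of `L` of the form
`x ↦ a • σ x` with `a ∈ Lˣ` and `σ ∈ Gal(L/K)`; equivalently, the subgroup of
`Equiv.Perm L` generated by multiplications by units and `K`-algebra automorphisms. -/
def semilinearGroup (K L : Type*) [Field K] [Field L] [Algebra K L] : Subgroup (Equiv.Perm L) :=
  unitsMulGroup L ⊔ Subgroup.closure {π : Equiv.Perm L | ∃ σ : L ≃ₐ[K] L, π = σ.toEquiv}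

end ACFew

namespace ACFew

open Polynomial


theorem key_lemma {K : Type*} [Field K] [Finite K] {V : Type*} [AddCommGroup V] [Module K V]
    [FiniteDimensional K V] [Nontrivial V] [Finite V]
    (B : V →ₗ[K] V →ₗ[K] K) (halt : ∀ v, B v v = 0)
    (hnondeg : ∀ v : V, (∀ w : V, B v w = 0) → v = 0)
    (g : Module.End K V) (n : ℕ) (hn3 : 3 ≤ n) (hgn : g ^ n = 1)
    (hfpf : ∀ k : ℕ, ¬ (n ∣ k) → ∀ v : V, (g ^ k) v = v → v = 0)
    (hB : ∀ (k : ℕ) (u w : V), B ((g ^ k) u) ((g ^ k) w) = B u w)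
    (e : ℕ) (he : Nat.card V = e ^ 2) :
    n ≤ e + 1 := by
  classical
  haveI := Fintype.ofFinite K
  haveI := Fintype.ofFinite V
  set q := Fintype.card K with hq_def
  have hq2 : 2 ≤ q := Fintype.one_lt_card
  have hcardV : q ^ (Module.finrank K V) = e ^ 2 := by
    rw [← Module.card_eq_pow_finrank (K := K) (V := V), ← Nat.card_eq_fintype_card, he]
  -- the minimal polynomial business
  haveI : Nontrivial (Module.End K V) := by
    obtain ⟨v, hv⟩ := exists_ne (0 : V)
    exact ⟨1, 0, fun h => hv (by simpa using LinearMap.congr_fun h v)⟩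
  have hPmonic : (X ^ n - C (1 : K)).Monic := monic_X_pow_sub_C _ (by omega)
  have hPg : (aeval g) (X ^ n - C (1 : K)) = 0 := by
    simp [map_sub, hgn]
  have hint : IsIntegral K g := ⟨X ^ n - C 1, hPmonic, hPg⟩
  have hμ0 : minpoly K g ≠ 0 := minpoly.ne_zero hint
  have hμdeg : 0 < (minpoly K g).natDegree := minpoly.natDegree_pos hint
  have hμdvd : minpoly K g ∣ X ^ n - C 1 := minpoly.dvd K g hPg
  obtain ⟨f0, hf0irr, hf0dvd⟩ :=
    WfDvdMonoid.exists_irreducible_factor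
      (Polynomial.not_isUnit_of_natDegree_pos _ hμdeg) hμ0
  obtain ⟨f₁, hf₁m, hf₁irr, hf₁dvdμ⟩ :
      ∃ f₁ : K[X], f₁.Monic ∧ Irreducible f₁ ∧ f₁ ∣ minpoly K g := by
    refine ⟨f0 * C f0.leadingCoeff⁻¹, monic_mul_leadingCoeff_inv hf0irr.ne_zero, ?_, ?_⟩
    · have hassoc : Associated f0 (f0 * C f0.leadingCoeff⁻¹) :=
        ⟨(Polynomial.isUnit_C.2 ((leadingCoeff_ne_zero.2 hf0irr.ne_zero).isUnit.inv)).unit, rfl⟩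
      exact hassoc.irreducible hf0irr
    · have hassoc : Associated f0 (f0 * C f0.leadingCoeff⁻¹) :=
        ⟨(Polynomial.isUnit_C.2 ((leadingCoeff_ne_zero.2 hf0irr.ne_zero).isUnit.inv)).unit, rfl⟩
      exact hassoc.symm.dvd.trans hf0dvd
  have hf₁0 : f₁ ≠ 0 := hf₁irr.ne_zero
  set d := f₁.natDegree with hd_def
  have hd1 : 0 < d := hf₁irr.natDegree_pos
  -- choose v ≠ 0 with f₁(g) v = 0
  obtain ⟨s, hs⟩ := hf₁dvdμ
  have hsne : (aeval g) s ≠ 0 := by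
    intro h0
    have hs0 : s ≠ 0 := by
      intro h; rw [h, mul_zero] at hs; exact hμ0 hs
    have hdd := minpoly.degree_le_of_ne_zero K g hs0 h0
    have : (minpoly K g).natDegree = d + s.natDegree := by
      rw [hs, natDegree_mul hf₁0 hs0]
    have h2 : s.natDegree < (minpoly K g).natDegree := by omega
    have h3 : s.degree < (minpoly K g).degree := by
      apply Polynomial.degree_lt_degree h2
    exact absurd (lt_of_le_of_lt hdd h3) (lt_irrefl _)
  obtain ⟨w, hw⟩ : ∃ w : V, (aeval g) s w ≠ 0 := by
    by_contra h
    push_neg at h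
    exact hsne (LinearMap.ext fun x => h x)
  obtain ⟨v, hv, hfv⟩ : ∃ v : V, v ≠ 0 ∧ (aeval g) f₁ v = 0 := by
    refine ⟨(aeval g) s w, hw, ?_⟩
    have h1 : (aeval g) f₁ ((aeval g) s w) = (aeval g) (f₁ * s) w := by
      rw [map_mul, Module.End.mul_apply]
    rw [h1, ← hs, minpoly.aeval]
    rfl
  -- the field F = K[X]/(f₁)
  haveI hfact : Fact (Irreducible f₁) := ⟨hf₁irr⟩
  set α : AdjoinRoot f₁ := AdjoinRoot.root f₁ with hα_def
  have hminα : minpoly K α = f₁ := by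
    have h0 := AdjoinRoot.minpoly_root hf₁0
    rw [hf₁m.leadingCoeff, inv_one, map_one, mul_one] at h0
    exact h0
  haveI : FiniteDimensional K (AdjoinRoot f₁) :=
    Module.Finite.of_basis (AdjoinRoot.powerBasis hf₁0).basis
  haveI : Finite (AdjoinRoot f₁) := Module.finite_of_finite K
  haveI := Fintype.ofFinite (AdjoinRoot f₁)
  have hfinrankF : Module.finrank K (AdjoinRoot f₁) = d :=
    (AdjoinRoot.powerBasis hf₁0).finrank
  have hcardF : Fintype.card (AdjoinRoot f₁) = q ^ d := by
    rw [Module.card_eq_pow_finrank (K := K) (V := AdjoinRoot f₁), hfinrankF]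
  -- α has "order n"
  have hαroot : (aeval α) f₁ = 0 := by
    have h0 := minpoly.aeval K α
    rwa [hminα] at h0
  have hα1 : α ^ n = 1 := by
    obtain ⟨t, ht⟩ : f₁ ∣ X ^ n - C 1 := (show f₁ ∣ minpoly K g from ⟨s, hs⟩).trans hμdvd
    have : (aeval α) (X ^ n - C (1 : K)) = 0 := by
      rw [ht, map_mul, hαroot, zero_mul]
    have h2 : α ^ n - 1 = 0 := by simpa using this
    linear_combination h2
  have hαne : α ≠ 0 := by
    intro h
    rw [h, zero_pow (by omega : n ≠ 0)] at hα1
    exact zero_ne_one hα1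
  have hαdvd : ∀ k : ℕ, α ^ k = 1 → n ∣ k := by
    intro k hk
    by_contra hnk
    have h1 : (aeval α) (X ^ k - C (1 : K)) = 0 := by simp [hk]
    have h2 : f₁ ∣ X ^ k - C 1 := by
      have h0 := minpoly.dvd K α h1
      rwa [hminα] at h0
    obtain ⟨t, ht⟩ := h2
    have h3 : (aeval g) (X ^ k - C (1 : K)) v = 0 := by
      rw [ht, mul_comm, map_mul, Module.End.mul_apply, hfv, map_zero]
    have h4 : (g ^ k) v = v := by
      have h5 : (g ^ k) v - v = 0 := by
        have := h3
        simp only [map_sub, aeval_X_pow, map_one, LinearMap.sub_apply,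
          Module.End.one_apply] at this
        exact this
      exact sub_eq_zero.mp h5
    exact hv (hfpf k hnk v h4)
  have hdvd_qd : n ∣ q ^ d - 1 := by
    apply hαdvd
    rw [← hcardF]
    exact FiniteField.pow_card_sub_one_eq_one α hαne
  -- Frobenius algebra homomorphisms
  have hKq : ∀ c : K, c ^ q = c := fun c => FiniteField.pow_card c
  obtain ⟨p, hchar⟩ := CharP.exists K
  haveI : CharP K p := hchar
  obtain ⟨r, pp, hqpr⟩ := FiniteField.card K p
  haveI : Fact p.Prime := ⟨pp⟩
  haveI : CharP (AdjoinRoot f₁) p :=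
    charP_of_injective_algebraMap (algebraMap K (AdjoinRoot f₁)).injective p
  haveI : ExpChar (AdjoinRoot f₁) p := ExpChar.prime pp
  have hτ : ∃ τ : AdjoinRoot f₁ →ₐ[K] AdjoinRoot f₁, ∀ x, τ x = x ^ q := by
    refine ⟨AlgHom.mk' (iterateFrobenius (AdjoinRoot f₁) p (r : ℕ)) ?_, ?_⟩
    · intro c x
      simp only [iterateFrobenius_def, Algebra.smul_def, mul_pow, ← map_pow, ← hqpr, ← hq_def, hKq]
    · intro x
      simp [iterateFrobenius_def, ← hqpr, hq_def]
  have hfrobj : ∀ j : ℕ, ∃ σ : AdjoinRoot f₁ →ₐ[K] AdjoinRoot f₁,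
      ∀ x, σ x = x ^ q ^ j := by
    intro j
    induction j with
    | zero => exact ⟨AlgHom.id K _, by simp⟩
    | succ j ih =>
      obtain ⟨σ, hσ⟩ := ih
      obtain ⟨τ, hτ'⟩ := hτ
      refine ⟨τ.comp σ, fun x => ?_⟩
      rw [AlgHom.comp_apply, hσ, hτ', pow_succ, pow_mul]
  -- n does not divide q^j - 1 for 0 < j < d
  have hndvd : ∀ j : ℕ, 0 < j → j < d → ¬ (n ∣ q ^ j - 1) := by
    intro j hj0 hjd hdvd
    obtain ⟨σ, hσ⟩ := hfrobj j
    have hqj1 : 1 ≤ q ^ j := Nat.one_le_pow _ _ (by omega)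
    have hαfix : α ^ q ^ j = α := by
      obtain ⟨c, hc⟩ := hdvd
      have h1 : α ^ (q ^ j - 1) = 1 := by rw [hc, pow_mul, hα1, one_pow]
      calc α ^ q ^ j = α ^ (q ^ j - 1 + 1) := by congr 1; omega
        _ = α ^ (q ^ j - 1) * α := by rw [pow_succ]
        _ = α := by rw [h1, one_mul]
    have hfix : ∀ x : AdjoinRoot f₁, x ^ q ^ j = x := by
      have hle : Algebra.adjoin K {α} ≤ AlgHom.equalizer σ (AlgHom.id K _) := by
        apply Algebra.adjoin_le
        intro x hx
        rw [Set.mem_singleton_iff] at hx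
        subst hx
        show σ α = α
        rw [hσ, hαfix]
      rw [hα_def, AdjoinRoot.adjoinRoot_eq_top] at hle
      intro x
      have hx : x ∈ AlgHom.equalizer σ (AlgHom.id K _) := hle (by trivial)
      have := (AlgHom.mem_equalizer _ _ _).mp hx
      rw [hσ] at this
      simpa using this
    -- too many roots for X^(q^j) - X
    have h2qj : 2 ≤ q ^ j := le_trans hq2 (Nat.le_self_pow (by omega) q)
    set Q : (AdjoinRoot f₁)[X] := X ^ (q ^ j) - X with hQ_def
    have hQdeg : Q.natDegree = q ^ j := by
      rw [hQ_def]
      have h1 : (X : (AdjoinRoot f₁)[X]).natDegree < (X ^ (q ^ j) :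
          (AdjoinRoot f₁)[X]).natDegree := by
        rw [natDegree_X, natDegree_X_pow]; omega
      rw [natDegree_sub_eq_left_of_natDegree_lt h1, natDegree_X_pow]
    have hQ0 : Q ≠ 0 := by
      intro h
      rw [h, natDegree_zero] at hQdeg
      omega
    have hallroots : ∀ x : AdjoinRoot f₁, x ∈ Q.roots := by
      intro x
      rw [mem_roots hQ0]
      simp [hQ_def, IsRoot, hfix x]
    have hcardle : Fintype.card (AdjoinRoot f₁) ≤ q ^ j := by
      calc Fintype.card (AdjoinRoot f₁) = Finset.univ.card (α := AdjoinRoot f₁) := rfl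
        _ ≤ Q.roots.toFinset.card :=
            Finset.card_le_card (fun x _ => Multiset.mem_toFinset.mpr (hallroots x))
        _ ≤ Multiset.card Q.roots := Multiset.toFinset_card_le _
        _ ≤ Q.natDegree := card_roots' Q
        _ = q ^ j := hQdeg
    rw [hcardF] at hcardle
    have : q ^ j < q ^ d := Nat.pow_lt_pow_right (by omega) hjd
    omega
  -- the cyclic submodule spanned by v has dimension d, so d ≤ finrank V
  have hev : ∃ ev : K[X] →ₗ[K] V, ∀ p : K[X], ev p = (aeval g) p v := by
    refine ⟨{ toFun := fun p => (aeval g) p v, map_add' := ?_, map_smul' := ?_ }, fun p => rfl⟩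
    · intro p1 p2; show (aeval g) (p1 + p2) v = _; rw [map_add, LinearMap.add_apply]
    · intro c p1; show (aeval g) (c • p1) v = _; rw [map_smul, LinearMap.smul_apply]; rfl
  obtain ⟨ev, hev⟩ := hev
  have hker : ∀ p : K[X], p.degree < (d : WithBot ℕ) → (aeval g) p v = 0 → p = 0 := by
    intro p hpdeg hp0
    by_contra hpne
    have hnd : ¬ f₁ ∣ p := by
      intro hdvd
      have := Polynomial.natDegree_le_of_dvd hdvd hpne
      have h2 : p.natDegree < d := by
        rwa [← natDegree_lt_iff_degree_lt hpne] at hpdeg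
      omega
    have hcop : IsCoprime f₁ p := (hf₁irr.coprime_iff_not_dvd).mpr hnd
    obtain ⟨a, b, hab⟩ := hcop
    have : v = 0 := by
      have h1 : (aeval g) (a * f₁ + b * p) v = v := by
        rw [hab]; simp
      rw [map_add, LinearMap.add_apply] at h1
      have h2 : (aeval g) (a * f₁) v = 0 := by
        rw [map_mul, Module.End.mul_apply, hfv, map_zero]
      have h3 : (aeval g) (b * p) v = 0 := by
        rw [map_mul, Module.End.mul_apply, hp0, map_zero]
      rw [h2, h3, add_zero] at h1
      exact h1.symm
    exact hv this
  have hdled : d ≤ Module.finrank K V := by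
    have hinj : Function.Injective (ev.comp (Polynomial.degreeLT K d).subtype) := by
      rw [← LinearMap.ker_eq_bot]
      rw [LinearMap.ker_eq_bot']
      rintro ⟨p, hp⟩ hp0
      have hdeg : p.degree < (d : WithBot ℕ) := Polynomial.mem_degreeLT.mp hp
      have : (aeval g) p v = 0 := by
        have := hp0
        rw [LinearMap.comp_apply] at this
        rw [← hev p]
        exact this
      have := hker p hdeg this
      exact Subtype.ext this
    have h1 : Module.finrank K (Polynomial.degreeLT K d) = d := by
      rw [(Polynomial.degreeLTEquiv K d).finrank_eq]
      simp
    calc d = Module.finrank K (LinearMap.range (ev.comp (Polynomial.degreeLT K d).subtype)) := by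
          rw [LinearMap.finrank_range_of_inj hinj, h1]
      _ ≤ Module.finrank K V := Submodule.finrank_le _
  -- order of q in ZMod n
  haveI : NeZero n := ⟨by omega⟩
  have hdvd_iff : ∀ k : ℕ, n ∣ q ^ k - 1 ↔ ((q : ZMod n)) ^ k = 1 := by
    intro k
    have h1 : 1 ≤ q ^ k := Nat.one_le_pow _ _ (by omega)
    rw [← ZMod.natCast_eq_zero_iff, Nat.cast_sub h1, Nat.cast_pow, Nat.cast_one,
      sub_eq_zero]
  have hord : orderOf ((q : ZMod n)) = d := by
    have hud : ((q : ZMod n)) ^ d = 1 := (hdvd_iff d).mp hdvd_qd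
    have hdvd' : orderOf ((q : ZMod n)) ∣ d := orderOf_dvd_of_pow_eq_one hud
    have hfin : 0 < orderOf ((q : ZMod n)) := by
      apply orderOf_pos_iff.mpr
      exact isOfFinOrder_iff_pow_eq_one.mpr ⟨d, hd1, hud⟩
    rcases Nat.lt_or_ge (orderOf ((q : ZMod n))) d with hlt | hge
    · exact absurd ((hdvd_iff _).mpr (pow_orderOf_eq_one _))
        (hndvd _ hfin hlt)
    · exact le_antisymm (Nat.le_of_dvd hd1 hdvd') hge
  have hqd_pos : 2 ≤ q ^ d := le_trans hq2 (Nat.le_self_pow (by omega) q)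
  -- dichotomy
  by_cases hiso : ∀ a b : K[X], B ((aeval g) a v) ((aeval g) b v) = 0
  · -- totally isotropic case : 2 * d ≤ finrank K V and n ∣ q ^ d - 1
    have hBrefl : LinearMap.BilinForm.IsRefl B := LinearMap.IsAlt.isRefl halt
    have hBnd : LinearMap.BilinForm.Nondegenerate B :=
      (LinearMap.IsRefl.nondegenerate_iff_separatingLeft hBrefl).mpr hnondeg
    have hfrU : Module.finrank K
        (LinearMap.range (ev.comp (Polynomial.degreeLT K d).subtype)) = d := by
      have hinj : Function.Injective (ev.comp (Polynomial.degreeLT K d).subtype) := by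
        rw [← LinearMap.ker_eq_bot, LinearMap.ker_eq_bot']
        rintro ⟨p, hp⟩ hp0
        have hdeg : p.degree < (d : WithBot ℕ) := Polynomial.mem_degreeLT.mp hp
        have h5 : (aeval g) p v = 0 := by
          have h6 := hp0
          rw [LinearMap.comp_apply] at h6
          rw [← hev p]; exact h6
        exact Subtype.ext (hker p hdeg h5)
      rw [LinearMap.finrank_range_of_inj hinj, (Polynomial.degreeLTEquiv K d).finrank_eq]
      simp
    have hUle : LinearMap.range (ev.comp (Polynomial.degreeLT K d).subtype) ≤
        LinearMap.BilinForm.orthogonal B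
          (LinearMap.range (ev.comp (Polynomial.degreeLT K d).subtype)) := by
      rintro x ⟨px, rfl⟩
      intro y hy
      obtain ⟨py, rfl⟩ := hy
      show B _ _ = 0
      rw [LinearMap.comp_apply, LinearMap.comp_apply, hev, hev]
      exact hiso _ _
    have horth := LinearMap.BilinForm.finrank_orthogonal hBnd
      (LinearMap.range (ev.comp (Polynomial.degreeLT K d).subtype))
    have hmono := Submodule.finrank_mono hUle
    rw [hfrU] at horth hmono
    have h2d : 2 * d ≤ Module.finrank K V := by omega
    have hqde : q ^ d ≤ e := by
      have h1 : (q ^ d) ^ 2 ≤ e ^ 2 := by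
        calc (q ^ d) ^ 2 = q ^ (2 * d) := by rw [← pow_mul, mul_comm]
          _ ≤ q ^ Module.finrank K V := Nat.pow_le_pow_right (by omega) h2d
          _ = e ^ 2 := hcardV
      exact (Nat.pow_le_pow_iff_left (by omega)).mp h1
    have hnle : n ≤ q ^ d - 1 := Nat.le_of_dvd (by omega) hdvd_qd
    omega
  · push_neg at hiso
    obtain ⟨a, b, hab⟩ := hiso
    -- the adjoint identity
    have L1 : ∀ (c : K[X]) (x y : V),
        B ((aeval (g ^ (n - 1))) c x) y = B x ((aeval g) c y) := by
      intro c
      induction c using Polynomial.induction_on' with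
      | add p1 p2 hp1 hp2 =>
        intro x y
        rw [map_add, map_add, LinearMap.add_apply, LinearMap.add_apply, map_add,
          LinearMap.add_apply, (B x).map_add, hp1 x y, hp2 x y]
      | monomial k ck =>
        intro x y
        have core : B ((g ^ ((n - 1) * k)) x) y = B x ((g ^ k) y) := by
          have h0 := hB ((n - 1) * k) x ((g ^ k) y)
          have h1 : (g ^ ((n - 1) * k)) ((g ^ k) y) = y := by
            have h2 : (g ^ ((n - 1) * k)) ((g ^ k) y) = (g ^ ((n - 1) * k + k)) y := by
              rw [pow_add, Module.End.mul_apply]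
            have h3 : (n - 1) * k + k = n * k := by
              have h4 : n - 1 + 1 = n := by omega
              calc (n - 1) * k + k = ((n - 1) + 1) * k := by ring
                _ = n * k := by rw [h4]
            rw [h2, h3, pow_mul, hgn, one_pow, Module.End.one_apply]
          rw [h1] at h0
          exact h0
        have hL : (aeval (g ^ (n - 1))) (monomial k ck) x = ck • ((g ^ ((n - 1) * k)) x) := by
          rw [aeval_monomial, Module.End.mul_apply, ← pow_mul, Module.algebraMap_end_apply]
        have hR : (aeval g) (monomial k ck) y = ck • ((g ^ k) y) := by
          rw [aeval_monomial, Module.End.mul_apply, Module.algebraMap_end_apply]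
        rw [hL, hR, map_smul, LinearMap.smul_apply, (B x).map_smul, smul_eq_mul,
          smul_eq_mul, core]
    -- α⁻¹ is a root of f₁
    have hint2 : IsIntegral K (α⁻¹ : AdjoinRoot f₁) := IsIntegral.of_finite K _
    have hroot : (aeval (α⁻¹ : AdjoinRoot f₁)) f₁ = 0 := by
      by_contra hne
      have hmirr : Irreducible (minpoly K (α⁻¹ : AdjoinRoot f₁)) := minpoly.irreducible hint2
      have hmm : (minpoly K (α⁻¹ : AdjoinRoot f₁)).Monic := minpoly.monic hint2
      have hnotdvd : ¬ f₁ ∣ minpoly K (α⁻¹ : AdjoinRoot f₁) := by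
        intro hdvd
        have hass := hf₁irr.associated_of_dvd hmirr hdvd
        have heq := Polynomial.eq_of_monic_of_associated hf₁m hmm hass
        have h7 := minpoly.aeval K (α⁻¹ : AdjoinRoot f₁)
        rw [← heq] at h7
        exact hne h7
      obtain ⟨s2, t2, hst⟩ := (hf₁irr.coprime_iff_not_dvd).mpr hnotdvd
      have hαinv : α ^ (n - 1) = α⁻¹ := by
        have h1 : α ^ (n - 1) * α = 1 := by
          rw [← pow_succ]
          have h2 : n - 1 + 1 = n := by omega
          rw [h2]; exact hα1
        exact eq_inv_of_mul_eq_one_left h1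
      obtain ⟨w2, hw2⟩ : f₁ ∣ (minpoly K (α⁻¹ : AdjoinRoot f₁)).comp (X ^ (n - 1)) := by
        have h1 : (aeval α) ((minpoly K (α⁻¹ : AdjoinRoot f₁)).comp (X ^ (n - 1))) = 0 := by
          rw [aeval_comp]
          have h2 : (aeval α) ((X : K[X]) ^ (n - 1)) = α ^ (n - 1) := by simp
          rw [h2, hαinv]
          exact minpoly.aeval K _
        have h0 := minpoly.dvd K α h1
        rwa [hminα] at h0
      apply hab
      have hbsplit : (b : K[X]) =
          s2 * f₁ * b + t2 * (minpoly K (α⁻¹ : AdjoinRoot f₁)) * b := by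
        rw [← add_mul, hst, one_mul]
      have term1 : (aeval g) (s2 * f₁ * b) v = 0 := by
        rw [mul_right_comm, map_mul, Module.End.mul_apply, hfv, map_zero]
      have term2 : B ((aeval g) a v) ((aeval g)
          (t2 * (minpoly K (α⁻¹ : AdjoinRoot f₁)) * b) v) = 0 := by
        have h1 : t2 * (minpoly K (α⁻¹ : AdjoinRoot f₁)) * b =
            (minpoly K (α⁻¹ : AdjoinRoot f₁)) * (t2 * b) := by ring
        rw [h1, map_mul, Module.End.mul_apply]
        rw [← L1 (minpoly K (α⁻¹ : AdjoinRoot f₁)) ((aeval g) a v) ((aeval g) (t2 * b) v)]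
        have h2 : (aeval (g ^ (n - 1))) (minpoly K (α⁻¹ : AdjoinRoot f₁)) =
            (aeval g) ((minpoly K (α⁻¹ : AdjoinRoot f₁)).comp (X ^ (n - 1))) := by
          rw [aeval_comp]
          congr 1
          simp
        have h3 : (aeval (g ^ (n - 1))) (minpoly K (α⁻¹ : AdjoinRoot f₁)) ((aeval g) a v)
            = 0 := by
          rw [h2, hw2]
          have h4 : (aeval g) (f₁ * w2) ((aeval g) a v) = (aeval g) (f₁ * w2 * a) v := by
            rw [map_mul (aeval g) (f₁ * w2) a, Module.End.mul_apply]
          rw [h4]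
          have h5 : f₁ * w2 * a = w2 * a * f₁ := by ring
          rw [h5, map_mul, Module.End.mul_apply, hfv, map_zero]
        rw [h3, map_zero, LinearMap.zero_apply]
      calc B ((aeval g) a v) ((aeval g) b v)
          = B ((aeval g) a v) ((aeval g) (s2 * f₁ * b) v) +
            B ((aeval g) a v) ((aeval g)
              (t2 * (minpoly K (α⁻¹ : AdjoinRoot f₁)) * b) v) := by
            conv_lhs => rw [hbsplit]
            rw [map_add, LinearMap.add_apply, (B _).map_add]
        _ = 0 := by rw [term1, term2, (B _).map_zero, zero_add]
    -- coprimality of n and q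
    have hcop : Nat.Coprime n q := by
      have h2 : Nat.gcd n (q ^ d) ∣ q ^ d := Nat.gcd_dvd_right _ _
      have h3 : Nat.gcd n (q ^ d) ∣ q ^ d - 1 := (Nat.gcd_dvd_left _ _).trans hdvd_qd
      have h4 : q ^ d - (q ^ d - 1) = 1 := by omega
      have h1 : Nat.gcd n (q ^ d) ∣ 1 := h4 ▸ Nat.dvd_sub h2 h3
      have h5 : Nat.Coprime n (q ^ d) := Nat.dvd_one.mp h1
      exact (Nat.coprime_pow_right_iff hd1 n q).mp h5
    -- the conjugates α ^ (q ^ i), i < d, are distinct roots of f₁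
    have hdistinct : ∀ i j : ℕ, i < j → j < d → α ^ q ^ i ≠ α ^ q ^ j := by
      intro i j hij hjd hEq
      have hle : q ^ i ≤ q ^ j := Nat.pow_le_pow_right (by omega) (by omega)
      have h1 : α ^ q ^ i * α ^ (q ^ j - q ^ i) = α ^ q ^ j := by
        rw [← pow_add]; congr 1; omega
      rw [← hEq] at h1
      have h2 : α ^ (q ^ j - q ^ i) = 1 :=
        mul_left_cancel₀ (pow_ne_zero _ hαne) (h1.trans (mul_one (α ^ q ^ i)).symm)
      have h4 := hαdvd _ h2
      have h6 : q ^ i * q ^ (j - i) = q ^ j := by rw [← pow_add]; congr 1; omega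
      have h5 : q ^ j - q ^ i = q ^ i * (q ^ (j - i) - 1) := by
        rw [Nat.mul_sub, mul_one, h6]
      rw [h5] at h4
      have h10 : n ∣ q ^ (j - i) - 1 := (hcop.pow_right i).dvd_of_dvd_mul_left h4
      exact hndvd (j - i) (by omega) (by omega) h10
    have hβ : ∀ i : ℕ, (aeval ((α : AdjoinRoot f₁) ^ q ^ i)) f₁ = 0 := by
      intro i
      obtain ⟨σ, hσ⟩ := hfrobj i
      have h1 := Polynomial.aeval_algHom_apply σ α f₁
      rw [hαroot, map_zero] at h1
      rw [← hσ α]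
      exact h1
    have hfF0 : f₁.map (algebraMap K (AdjoinRoot f₁)) ≠ 0 := Polynomial.map_ne_zero hf₁0
    have hfFdeg : (f₁.map (algebraMap K (AdjoinRoot f₁))).natDegree = d :=
      hf₁m.natDegree_map _
    have hrootmem : ∀ x : AdjoinRoot f₁, (aeval x) f₁ = 0 →
        x ∈ (f₁.map (algebraMap K (AdjoinRoot f₁))).roots.toFinset := by
      intro x hx
      rw [Multiset.mem_toFinset, mem_roots hfF0]
      show (f₁.map (algebraMap K (AdjoinRoot f₁))).IsRoot x
      rw [IsRoot, eval_map, ← aeval_def]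
      exact hx
    have hTsub : (Finset.range d).image (fun i => α ^ q ^ i) ⊆
        (f₁.map (algebraMap K (AdjoinRoot f₁))).roots.toFinset := by
      intro x hx
      obtain ⟨i, hi, rfl⟩ := Finset.mem_image.mp hx
      exact hrootmem _ (hβ i)
    have hTcard : ((Finset.range d).image (fun i => α ^ q ^ i)).card = d := by
      rw [Finset.card_image_of_injOn, Finset.card_range]
      intro i hi j hj hEq
      rcases lt_trichotomy i j with h | h | h
      · exact absurd hEq (hdistinct i j h (Finset.mem_range.mp hj))
      · exact h
      · exact absurd hEq.symm (hdistinct j i h (Finset.mem_range.mp hi))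
    have hTeq : (Finset.range d).image (fun i => α ^ q ^ i) =
        (f₁.map (algebraMap K (AdjoinRoot f₁))).roots.toFinset := by
      apply Finset.eq_of_subset_of_card_le hTsub
      rw [hTcard]
      calc (f₁.map (algebraMap K (AdjoinRoot f₁))).roots.toFinset.card
          ≤ Multiset.card (f₁.map (algebraMap K (AdjoinRoot f₁))).roots :=
            Multiset.toFinset_card_le _
        _ ≤ (f₁.map (algebraMap K (AdjoinRoot f₁))).natDegree := card_roots' _
        _ = d := hfFdeg
    have hmem : (α⁻¹ : AdjoinRoot f₁) ∈ (Finset.range d).image (fun i => α ^ q ^ i) := by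
      rw [hTeq]; exact hrootmem _ hroot
    obtain ⟨i, hi, hEq⟩ := Finset.mem_image.mp hmem
    rw [Finset.mem_range] at hi
    have hdvd1 : n ∣ q ^ i + 1 := by
      apply hαdvd
      rw [pow_add, pow_one, hEq, inv_mul_cancel₀ hαne]
    have hipos : 0 < i := by
      rcases Nat.eq_zero_or_pos i with h0 | h
      · exfalso
        rw [h0, pow_zero] at hdvd1
        have := Nat.le_of_dvd (by omega) hdvd1
        omega
      · exact h
    have hdvd2 : n ∣ q ^ (2 * i) - 1 := by
      have h2 : 1 ≤ q ^ i := Nat.one_le_pow _ _ (by omega)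
      obtain ⟨c, hc⟩ := Nat.exists_eq_add_of_le h2
      have h1 : q ^ (2 * i) - 1 = (q ^ i + 1) * (q ^ i - 1) := by
        rw [two_mul, pow_add, hc]
        have h3 : (1 + c) * (1 + c) = (1 + c + 1) * ((1 + c) - 1) + 1 := by
          have h4 : (1 + c) - 1 = c := by omega
          rw [h4]; ring
        omega
      rw [h1]
      exact dvd_mul_of_dvd_left hdvd1 _
    have h2i : d ∣ 2 * i := by
      rw [← hord]
      exact orderOf_dvd_of_pow_eq_one ((hdvd_iff _).mp hdvd2)
    have h2ieq : 2 * i = d := by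
      obtain ⟨c, hc⟩ := h2i
      have hc2 : c < 2 → c = 1 ∨ c = 0 := by omega
      rcases Nat.lt_or_ge c 2 with hlt | hge
      · rcases hc2 hlt with h | h
        · rw [h, mul_one] at hc; omega
        · rw [h, mul_zero] at hc; omega
      · exfalso
        have := Nat.mul_le_mul_left d hge
        rw [← hc] at this
        omega
    have hqie : q ^ i ≤ e := by
      have h1 : (q ^ i) ^ 2 ≤ e ^ 2 := by
        calc (q ^ i) ^ 2 = q ^ (2 * i) := by rw [← pow_mul, mul_comm]
          _ = q ^ d := by rw [h2ieq]
          _ ≤ q ^ Module.finrank K V := Nat.pow_le_pow_right (by omega) (by omega)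
          _ = e ^ 2 := hcardV
      exact (Nat.pow_le_pow_iff_left (by omega)).mp h1
    have := Nat.le_of_dvd (by omega) hdvd1
    omega



/-- If a finite solvable group `G` acts faithfully, irreducibly and symplectically on a
finite symplectic vector space `V` with `|V| = e²`, and the Fitting subgroup `F(G)` acts
Frobeniusly on `V`, then every normal cyclic subgroup `M` of `F(G)` has `|M| ≤ e + 1`. -/
theorem normal_cyclic_of_fitting_le {K : Type*} [Field K]
    {V : Type*} [AddCommGroup V] [Module K V] [Finite V]
    {G : Type*} [Group G] [Finite G] [Group.IsSolvable G]
    (B : V →ₗ[K] V →ₗ[K] K)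
    (halt : ∀ v : V, B v v = 0)
    (hnondeg : ∀ v : V, (∀ w : V, B v w = 0) → v = 0)
    (ρ : Representation K G V)
    (hfaithful : Function.Injective ρ)
    (hirred : ∀ W : Submodule K V, (∀ (g : G), ∀ w ∈ W, ρ g w ∈ W) → W = ⊥ ∨ W = ⊤)
    (hsymp : ∀ (g : G) (u v : V), B (ρ g u) (ρ g v) = B u v)
    (hfrob : ∀ h ∈ fittingSubgroup G, h ≠ 1 → ∀ v : V, ρ h v = v → v = 0)
    (e : ℕ) (he : Nat.card V = e ^ 2)
    (M : Subgroup ↥(fittingSubgroup G)) (hMnormal : M.Normal) (hMcyclic : IsCyclic M) :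
    Nat.card M ≤ e + 1 := by
  classical
  obtain ⟨c, hc⟩ := hMcyclic.exists_generator
  have horder : orderOf c = Nat.card M := orderOf_eq_card_of_forall_mem_zpowers hc
  have h2 : orderOf (((c : ↥(fittingSubgroup G)) : G)) = orderOf c := by
    rw [show ((↑(↑c : ↥(fittingSubgroup G)) : G)) =
        (fittingSubgroup G).subtype (M.subtype c) from rfl]
    rw [orderOf_injective ((fittingSubgroup G).subtype) (Subgroup.subtype_injective _),
        orderOf_injective M.subtype (Subgroup.subtype_injective _)]
  have hepos : 1 ≤ e := by
    have hpos : 0 < Nat.card V := Nat.card_pos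
    rcases Nat.eq_zero_or_pos e with h0 | h1
    · rw [h0] at he; simp at he; omega
    · exact h1
  rcases Nat.lt_or_ge (Nat.card M) 3 with hn | hn3
  · have : 0 < Nat.card M := Nat.card_pos
    omega
  have hordm : orderOf (((c : ↥(fittingSubgroup G)) : G)) = Nat.card M := h2.trans horder
  have hm_ne : ∀ k : ℕ, ¬ (Nat.card M) ∣ k → ((c : ↥(fittingSubgroup G)) : G) ^ k ≠ 1 := by
    intro k hk h1
    exact hk (hordm ▸ orderOf_dvd_of_pow_eq_one h1)
  have hg_ne : ρ ((c : ↥(fittingSubgroup G)) : G) ≠ 1 := by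
    intro h
    have h3 : ((c : ↥(fittingSubgroup G)) : G) = 1 := hfaithful (by rw [h, map_one])
    rw [h3, orderOf_one] at hordm
    omega
  haveI : Nontrivial V := by
    by_contra h
    rw [not_nontrivial_iff_subsingleton] at h
    exact hg_ne (LinearMap.ext fun x => Subsingleton.elim _ _)
  obtain ⟨v₁, hv₁⟩ := exists_ne (0 : V)
  haveI : Finite K := Finite.of_injective (fun a : K => a • v₁)
    (smul_left_injective K hv₁)
  haveI : Module.Finite K V := ⟨⟨(Set.univ : Set V).toFinite.toFinset, by simp⟩⟩
  have hmn : ((c : ↥(fittingSubgroup G)) : G) ^ (Nat.card M) = 1 := by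
    rw [← hordm]; exact pow_orderOf_eq_one _
  apply key_lemma B halt hnondeg (ρ ((c : ↥(fittingSubgroup G)) : G)) (Nat.card M)
    hn3 ?_ ?_ ?_ e he
  · rw [← map_pow, hmn, map_one]
  · intro k hk w hw
    have hmem : ((c : ↥(fittingSubgroup G)) : G) ^ k ∈ fittingSubgroup G :=
      Subgroup.pow_mem _ ((c : ↥(fittingSubgroup G)).2) k
    refine hfrob _ hmem (hm_ne k hk) w ?_
    rw [map_pow]
    exact hw
  · intro k u w
    rw [← map_pow]
    exact hsymp _ u w

end ACFew
end

section
/- Let G be a finite solvable group and χ ∈ Irr(G) a faithful character with χχ̄ = 1_G + m₁α₁ + m₂α₂, where α₁, α₂ ∈ Irr(G) are distinct non-principal characters and m₁, m₂ are strictly positive integers. Then for any normal subgroup N of G, the restriction χ_N is irreducible if and only if N is not contained in Ker(α₁) and N is not contained in Ker(α₂). -/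
open scoped Classical

namespace ACFew

section Auxiliary

open Representation LinearMap Module

variable {G : Type*} [Group G]

theorem charInner_eq [Fintype G] (φ ψ : G → ℂ) :
    charInner G φ ψ = (Fintype.card G : ℂ)⁻¹ * ∑ g : G, φ g * (starRingEnd ℂ) (ψ g) := by
  rw [charInner, Nat.card_eq_fintype_card, finsum_eq_sum_of_fintype]

theorem avg_trace [Fintype G]
    {V : Type*} [AddCommGroup V] [Module ℂ V] [Module.Free ℂ V] [Module.Finite ℂ V]
    (ρ : Representation ℂ G V) :
    (Fintype.card G : ℂ)⁻¹ * ∑ g : G, LinearMap.trace ℂ V (ρ g)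
      = (finrank ℂ (invariants ρ) : ℂ) := by
  letI : Invertible (Fintype.card G : ℂ) :=
    invertibleOfNonzero (by exact_mod_cast Fintype.card_ne_zero)
  rw [← (isProj_averageMap ρ).trace]
  simp [GroupAlgebra.average, _root_.map_sum, invOf_eq_inv, Finset.mul_sum]

theorem trace_linHom {n : ℕ} (ρ : Representation ℂ G (Fin n → ℂ)) (g : G) :
    LinearMap.trace ℂ _ ((linHom ρ ρ) g)
      = LinearMap.trace ℂ _ (ρ g⁻¹) * LinearMap.trace ℂ _ (ρ g) := by
  set V := (Fin n → ℂ)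
  have e_apply : ∀ y, dualTensorHomEquiv ℂ V V y = dualTensorHom ℂ V V y := fun y =>
    rfl
  have h : (linHom ρ ρ) g = (dualTensorHomEquiv ℂ V V).conj
      (TensorProduct.map (ρ.dual g) (ρ g)) := by
    refine LinearMap.ext fun f => ?_
    obtain ⟨x, rfl⟩ := (dualTensorHomEquiv ℂ V V).surjective f
    have hc := LinearMap.congr_fun (dualTensorHom_comm ρ ρ g) x
    simp only [LinearMap.coe_comp, Function.comp_apply] at hc
    simp only [LinearEquiv.conj_apply, LinearMap.coe_comp, Function.comp_apply,
      LinearEquiv.coe_coe, LinearEquiv.symm_apply_apply]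
    rw [e_apply, e_apply]
    exact hc.symm
  rw [h, LinearMap.trace_conj', LinearMap.trace_tensorProduct', ρ.dual_apply,
    LinearMap.trace_transpose']

theorem endDim_le_one [Fintype G] {n : ℕ}
    (ρ : Representation ℂ G (Fin n → ℂ))
    (h : ∑ g : G, LinearMap.trace ℂ _ (ρ g) * (starRingEnd ℂ) (LinearMap.trace ℂ _ (ρ g))
        = (Fintype.card G : ℂ)) :
    finrank ℂ (invariants (linHom ρ ρ)) ≤ 1 := by
  set α : G → ℂ := fun g => LinearMap.trace ℂ _ (ρ g) with hα
  set d := finrank ℂ (invariants (linHom ρ ρ)) with hdd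
  have hd : (d : ℂ) = (Fintype.card G : ℂ)⁻¹ * ∑ g : G, α g⁻¹ * α g := by
    rw [← avg_trace (linHom ρ ρ)]
    congr 1
    exact Finset.sum_congr rfl fun g _ => trace_linHom ρ g
  have hsq : ∑ g : G, ‖α g‖ ^ 2 = (Fintype.card G : ℝ) := by
    have h2 : ((∑ g : G, ‖α g‖ ^ 2 : ℝ) : ℂ) = ((Fintype.card G : ℝ) : ℂ) := by
      push_cast
      rw [← h]
      refine Finset.sum_congr rfl fun g _ => ?_
      rw [Complex.mul_conj, Complex.normSq_eq_norm_sq]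
      push_cast
      ring
    exact Complex.ofReal_injective h2
  have hcardpos : (0:ℝ) < Fintype.card G := by positivity
  set a : EuclideanSpace ℂ G := WithLp.toLp 2 (fun g => (starRingEnd ℂ) (α g)) with ha
  set b : EuclideanSpace ℂ G := WithLp.toLp 2 (fun g => α g⁻¹) with hb
  have hinner : (inner ℂ a b : ℂ) = ∑ g : G, α g * α g⁻¹ := by
    rw [PiLp.inner_apply]
    refine Finset.sum_congr rfl fun g _ => ?_
    simp [ha, hb, RCLike.inner_apply, mul_comm]
  have hna : ‖a‖ = Real.sqrt (Fintype.card G) := by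
    rw [EuclideanSpace.norm_eq]
    congr 1
    simpa [ha] using hsq
  have hnb : ‖b‖ = Real.sqrt (Fintype.card G) := by
    rw [EuclideanSpace.norm_eq]
    congr 1
    rw [← hsq]
    exact Equiv.sum_comp (Equiv.inv G) (fun g => ‖α g‖ ^ 2)
  have hcs : ‖(inner ℂ a b : ℂ)‖ ≤ (Fintype.card G : ℝ) := by
    calc ‖(inner ℂ a b : ℂ)‖ ≤ ‖a‖ * ‖b‖ := norm_inner_le_norm a b
    _ = (Fintype.card G : ℝ) := by
        rw [hna, hnb]
        exact Real.mul_self_sqrt hcardpos.le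
  have hdle : (d : ℝ) ≤ 1 := by
    have hnd : (d : ℝ) = ‖(d : ℂ)‖ := by simp
    rw [hnd, hd, norm_mul]
    have h1 : ‖((Fintype.card G : ℂ))⁻¹‖ = (Fintype.card G : ℝ)⁻¹ := by simp
    have h2 : ‖∑ g : G, α g⁻¹ * α g‖ ≤ (Fintype.card G : ℝ) := by
      rw [show ∑ g : G, α g⁻¹ * α g = ∑ g : G, α g * α g⁻¹ from
        Finset.sum_congr rfl fun g _ => mul_comm _ _, ← hinner]
      exact hcs
    calc ‖((Fintype.card G : ℂ))⁻¹‖ * ‖∑ g : G, α g⁻¹ * α g‖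
        ≤ (Fintype.card G : ℝ)⁻¹ * (Fintype.card G : ℝ) := by
          rw [h1]; exact mul_le_mul_of_nonneg_left h2 (by positivity)
      _ = 1 := inv_mul_cancel₀ hcardpos.ne'
  exact_mod_cast hdle

theorem rho_eq_one_of [Fintype G] {n : ℕ} (hn : 0 < n)
    (ρ : Representation ℂ G (Fin n → ℂ))
    (hend : finrank ℂ (invariants (linHom ρ ρ)) ≤ 1)
    (N : Subgroup G) (hN : N.Normal)
    (hinv : invariants (ρ.comp N.subtype) ≠ ⊥) :
    ∀ x ∈ N, ρ x = 1 := by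
  set ρN := ρ.comp N.subtype with hρN
  letI : Invertible ((Fintype.card ↥N : ℂ)) :=
    invertibleOfNonzero (by exact_mod_cast Fintype.card_ne_zero)
  set e := averageMap ρN with he
  have e_eq : e = ⅟(Fintype.card ↥N : ℂ) • ∑ x : ↥N, ρ (x : G) := by
    simp only [he, averageMap, GroupAlgebra.average, map_smul, map_sum]
    congr 1
    refine Finset.sum_congr rfl fun x _ => ?_
    rw [MonoidAlgebra.of_apply, Representation.asAlgebraHom_single, one_smul]
    rfl
  have heq : ∀ g : G, (linHom ρ ρ) g e = e := by
    intro g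
    rw [linHom_apply, e_eq, ← Module.End.mul_eq_comp, ← Module.End.mul_eq_comp,
      smul_mul_assoc, mul_smul_comm, Finset.sum_mul, Finset.mul_sum]
    congr 1
    have hconj : ∀ x : ↥N, ρ g * (ρ (x : G) * ρ g⁻¹) = ρ (g * (x : G) * g⁻¹) := by
      intro x; rw [map_mul, map_mul, mul_assoc]
    simp_rw [hconj]
    let φ : ↥N ≃ ↥N :=
      { toFun := fun x => ⟨g * (x : G) * g⁻¹, hN.conj_mem _ x.2 g⟩
        invFun := fun x => ⟨g⁻¹ * (x : G) * g, by simpa using hN.conj_mem _ x.2 g⁻¹⟩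
        left_inv := fun x => by ext; simp; group
        right_inv := fun x => by ext; simp; group }
    calc ∑ x : ↥N, ρ (g * (x : G) * g⁻¹) = ∑ x : ↥N, ρ ((φ x : G)) := rfl
      _ = ∑ x : ↥N, ρ (x : G) := Equiv.sum_comp φ fun x => ρ (x : G)
  have hone : (1 : (Fin n → ℂ) →ₗ[ℂ] (Fin n → ℂ)) ∈ invariants (linHom ρ ρ) := by
    intro g
    rw [linHom_apply]
    simp only [← Module.End.mul_eq_comp, one_mul, ← map_mul, mul_inv_cancel, map_one]
  have hv0 : (fun _ => (1:ℂ) : Fin n → ℂ) ≠ 0 := by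
    intro hc
    have := congrFun hc ⟨0, hn⟩
    simp at this
  have hone_ne : (1 : (Fin n → ℂ) →ₗ[ℂ] (Fin n → ℂ)) ≠ 0 := by
    intro hc
    exact hv0 (by simpa using congrArg (fun f => f (fun _ => (1:ℂ))) hc)
  have hspan : invariants (linHom ρ ρ)
      = Submodule.span ℂ {(1 : (Fin n → ℂ) →ₗ[ℂ] (Fin n → ℂ))} := by
    refine (Submodule.eq_of_le_of_finrank_le ((Submodule.span_le).2 ?_) ?_).symm
    · simpa using hone
    · rw [finrank_span_singleton hone_ne]
      exact hend
  have hemem : e ∈ invariants (linHom ρ ρ) := fun g => heq g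
  rw [hspan, Submodule.mem_span_singleton] at hemem
  obtain ⟨c, hc⟩ := hemem
  obtain ⟨v, hvmem, hvne⟩ := (Submodule.ne_bot_iff _).1 hinv
  have hev : e v = v := averageMap_id ρN v hvmem
  have hc1 : c = 1 := by
    have h1 : c • v = v := by
      have h := congrArg (fun f : (Fin n → ℂ) →ₗ[ℂ] (Fin n → ℂ) => f v) hc
      simp only [LinearMap.smul_apply, Module.End.one_apply] at h
      rw [h, hev]
    by_contra hne
    have h2 : (c - 1) • v = 0 := by rw [sub_smul, one_smul, h1, sub_self]
    exact hvne ((smul_eq_zero.1 h2).resolve_left (sub_ne_zero.2 hne))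
  have he1 : e = 1 := by rw [← hc, hc1, one_smul]
  intro x hx
  refine LinearMap.ext fun w => ?_
  have hw : w ∈ invariants ρN := by
    have := averageMap_invariant ρN w
    rwa [show averageMap ρN w = w from by rw [← he, he1]; rfl] at this
  have := hw ⟨x, hx⟩
  simpa [hρN] using this

/-- For an irreducible character `α` of `G` with representation `ρ` and a normal subgroup `N`,
the dimension of `N`-invariants vanishes iff `N` is not contained in the kernel of `α`. -/
theorem key_dim_iff [Fintype G] {α : G → ℂ} {n : ℕ}
    (ρ : Representation ℂ G (Fin n → ℂ))
    (hρ : ∀ g, α g = LinearMap.trace ℂ _ (ρ g))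
    (hirr : charInner G α α = 1)
    (N : Subgroup G) (hN : N.Normal) :
    finrank ℂ (invariants (ρ.comp N.subtype)) = 0 ↔ ¬ (N : Set G) ⊆ charKer α := by
  have hcG : (Fintype.card G : ℂ) ≠ 0 := by exact_mod_cast Fintype.card_ne_zero
  have hcN : (Fintype.card ↥N : ℂ) ≠ 0 := by exact_mod_cast Fintype.card_ne_zero
  have hsumG : ∑ g : G, α g * (starRingEnd ℂ) (α g) = (Fintype.card G : ℂ) := by
    rw [charInner_eq] at hirr
    field_simp at hirr
    linear_combination hirr
  have hn : 0 < n := by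
    rcases Nat.eq_zero_or_pos n with h0 | h0
    · exfalso
      subst h0
      have hz : ∀ g : G, α g = 0 := by
        intro g
        rw [hρ g, show ρ g = 0 from Subsingleton.elim _ _, map_zero]
      rw [charInner_eq] at hirr
      simp [hz] at hirr
    · exact h0
  have hα1 : α 1 = (n : ℂ) := by
    rw [hρ 1, map_one, LinearMap.trace_one]
    simp
  have havg : ((finrank ℂ (invariants (ρ.comp N.subtype)) : ℕ) : ℂ)
      = (Fintype.card ↥N : ℂ)⁻¹ * ∑ x : ↥N, α (x : G) := by
    rw [← avg_trace (ρ.comp N.subtype)]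
    congr 1
    exact Finset.sum_congr rfl fun x _ => (hρ (x : G)).symm
  constructor
  · -- dim = 0 → N ⊄ ker α
    intro hd hker
    have hall : ∀ x : ↥N, α (x : G) = (n : ℂ) := fun x => by
      rw [← hα1]; exact hker x.2
    rw [hd] at havg
    simp only [Nat.cast_zero] at havg
    have : ∑ x : ↥N, α (x : G) = (Fintype.card ↥N : ℂ) * (n : ℂ) := by
      rw [Finset.sum_congr rfl fun x _ => hall x]
      simp [Finset.card_univ, mul_comm]
    rw [this, ← mul_assoc, inv_mul_cancel₀ hcN, one_mul] at havg
    exact (by exact_mod_cast hn.ne' : ((n : ℂ) ≠ 0)) havg.symm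
  · -- N ⊄ ker α → dim = 0
    intro hker
    by_contra hd
    have hinv : invariants (ρ.comp N.subtype) ≠ ⊥ := by
      intro hbot
      rw [hbot] at hd
      simp at hd
    have hend : finrank ℂ (invariants (linHom ρ ρ)) ≤ 1 := by
      apply endDim_le_one ρ
      rw [← hsumG]
      exact Finset.sum_congr rfl fun g _ => by rw [hρ g]
    have hone := rho_eq_one_of hn ρ hend N hN hinv
    apply hker
    intro x hx
    have : α x = α 1 := by
      rw [hρ x, hρ 1, hone x hx, map_one ρ]
    exact this
  
end Auxiliary

/-- Under Hypothesis 4.1: for a normal subgroup `N` of `G`, the restriction `χ_N` is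
irreducible if and only if `N ⊄ Ker(α₁)` and `N ⊄ Ker(α₂)`. -/
theorem restriction_irreducible_iff {G : Type*} [Group G] [Finite G] [Group.IsSolvable G]
    (χ α₁ α₂ : G → ℂ) (m₁ m₂ : ℕ)
    (hχ : IsIrrChar G χ) (hχfaithful : IsFaithfulChar χ)
    (hα₁ : IsIrrChar G α₁) (hα₂ : IsIrrChar G α₂) (hα_ne : α₁ ≠ α₂)
    (hα₁_nonprincipal : α₁ ≠ fun _ => (1 : ℂ)) (hα₂_nonprincipal : α₂ ≠ fun _ => (1 : ℂ))
    (hm₁ : 0 < m₁) (hm₂ : 0 < m₂)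
    (hprod : ∀ g : G, χ g * (starRingEnd ℂ) (χ g) = 1 + (m₁ : ℂ) * α₁ g + (m₂ : ℂ) * α₂ g)
    (N : Subgroup G) (hN : N.Normal) :
    IsIrrChar ↥N (charRes N χ) ↔
      (¬ (N : Set G) ⊆ charKer α₁ ∧ ¬ (N : Set G) ⊆ charKer α₂) := by
  classical
  letI : Fintype G := Fintype.ofFinite G
  obtain ⟨hχchar, hχinner⟩ := hχ
  obtain ⟨n₀, ρ₀, hρ₀⟩ := hχchar
  obtain ⟨hα₁char, hα₁inner⟩ := hα₁
  obtain ⟨n₁, ρ₁, hρ₁⟩ := hα₁char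
  obtain ⟨hα₂char, hα₂inner⟩ := hα₂
  obtain ⟨n₂, ρ₂, hρ₂⟩ := hα₂char
  have hcN : (Fintype.card ↥N : ℂ) ≠ 0 := by exact_mod_cast Fintype.card_ne_zero
  set d₁ := Module.finrank ℂ (Representation.invariants (ρ₁.comp N.subtype)) with hd₁
  set d₂ := Module.finrank ℂ (Representation.invariants (ρ₂.comp N.subtype)) with hd₂
  have hS₁ : (Fintype.card ↥N : ℂ)⁻¹ * ∑ x : ↥N, α₁ (x : G) = (d₁ : ℂ) := by
    rw [show ∑ x : ↥N, α₁ (x : G)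
        = ∑ x : ↥N, LinearMap.trace ℂ _ ((ρ₁.comp N.subtype) x) from
      Finset.sum_congr rfl fun x _ => hρ₁ (x : G)]
    exact avg_trace (ρ₁.comp N.subtype)
  have hS₂ : (Fintype.card ↥N : ℂ)⁻¹ * ∑ x : ↥N, α₂ (x : G) = (d₂ : ℂ) := by
    rw [show ∑ x : ↥N, α₂ (x : G)
        = ∑ x : ↥N, LinearMap.trace ℂ _ ((ρ₂.comp N.subtype) x) from
      Finset.sum_congr rfl fun x _ => hρ₂ (x : G)]
    exact avg_trace (ρ₂.comp N.subtype)
  have hres_char : IsChar ↥N (charRes N χ) :=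
    ⟨n₀, ρ₀.comp N.subtype, fun x => hρ₀ (x : G)⟩
  have hval : charInner ↥N (charRes N χ) (charRes N χ)
      = 1 + (m₁ : ℂ) * d₁ + (m₂ : ℂ) * d₂ := by
    rw [charInner_eq]
    rw [show ∑ x : ↥N, charRes N χ x * (starRingEnd ℂ) (charRes N χ x)
        = ∑ x : ↥N, (1 + (m₁ : ℂ) * α₁ (x : G) + (m₂ : ℂ) * α₂ (x : G)) from
      Finset.sum_congr rfl fun x _ => hprod (x : G)]
    rw [Finset.sum_add_distrib, Finset.sum_add_distrib, ← Finset.mul_sum, ← Finset.mul_sum,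
      Finset.sum_const, Finset.card_univ, nsmul_eq_mul, mul_one, mul_add, mul_add,
      inv_mul_cancel₀ hcN, mul_left_comm, hS₁, mul_left_comm, hS₂]
  have hkey₁ := key_dim_iff ρ₁ hρ₁ hα₁inner N hN
  have hkey₂ := key_dim_iff ρ₂ hρ₂ hα₂inner N hN
  rw [← hd₁] at hkey₁
  rw [← hd₂] at hkey₂
  constructor
  · rintro ⟨-, hinner1⟩
    rw [hval] at hinner1
    have hz : ((m₁ * d₁ + m₂ * d₂ : ℕ) : ℂ) = 0 := by
      push_cast
      linear_combination hinner1
    have hz' : m₁ * d₁ + m₂ * d₂ = 0 := by exact_mod_cast hz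
    have h1 : d₁ = 0 := by
      rcases Nat.eq_zero_of_add_eq_zero_right hz' with h
      rcases Nat.mul_eq_zero.1 h with h' | h'
      · exact absurd h' hm₁.ne'
      · exact h'
    have h2 : d₂ = 0 := by
      rcases Nat.eq_zero_of_add_eq_zero_left hz' with h
      rcases Nat.mul_eq_zero.1 h with h' | h'
      · exact absurd h' hm₂.ne'
      · exact h'
    exact ⟨hkey₁.1 h1, hkey₂.1 h2⟩
  · rintro ⟨h1, h2⟩
    refine ⟨hres_char, ?_⟩
    rw [hval, hkey₁.2 h1, hkey₂.2 h2]
    simp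


end ACFew
end
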